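/- If f, K_i (i=1,…,n) are continuously differentiable, the functions α_i satisfy α_0(t)≡0, α_n(t)≡t, α_i(0)=0, and are C¹, and x is a continuous solution of Σ_{i=1}^n ∫_{α_{i-1}(t)}^{α_i(t)} K_i(t,s) x(s) ds = f(t) on [0,T], then differentiating at t=0 yields f'(0) = x(0) · Σ_{i=1}^n K_i(0,0)(α_i'(0) − α_{i-1}'(0)); in particular, if Σ_{i=1}^n K_i(0,0)(α_i'(0) − α_{i-1}'(0)) ≠ 0 then x(0) = f'(0) / Σ_{i=1}^n K_i(0,0)(α_i'(0) − α_{i-1}'(0)). -/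

import Mathlib

/-!
On `[α_{i-1}(t), α_i(t)]` the `i`-th summand differs from `(α_i(t) - α_{i-1}(t)) K_i(0,0) x(0)`
by the integral of `K_i(t,s) x(s) - K_i(0,0) x(0)`, which is small times the interval length
because both ends tend to `0`; as the length is `O(t)`, the summand has derivative
`K_i(0,0) x(0) (α_i'(0) - α_{i-1}'(0))` at `0`. The equation holds on `[0, T]`, so this sum is
also the right derivative of `f` at `0`, which is `f'(0)`.
-/

open scoped Interval
open intervalIntegral Set Filter Asymptotics Topology MeasureTheory

section
variable {E : Type*} [NormedAddCommGroup E] [NormedSpace ℝ E]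

theorem isLittleO_integral_sub_of_continuousAt {φ : ℝ → ℝ → E} {a b : ℝ → ℝ} {t₀ s₀ : ℝ}
    (hφ : ContinuousAt (Function.uncurry φ) (t₀, s₀))
    (ha : Tendsto a (𝓝 t₀) (𝓝 s₀)) (hb : Tendsto b (𝓝 t₀) (𝓝 s₀)) :
    (fun t => ∫ s in a t..b t, (φ t s - φ t₀ s₀)) =o[𝓝 t₀] fun t => b t - a t := by
  refine isLittleO_iff.2 fun ε hε => ?_
  obtain ⟨δ, hδ, hφδ⟩ := Metric.continuousAt_iff.1 hφ ε hε
  have hball := Metric.ball_mem_nhds s₀ hδ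
  filter_upwards [Metric.ball_mem_nhds t₀ hδ, ha hball, hb hball] with t ht hat hbt
  have hsub : Ι (a t) (b t) ⊆ Metric.ball s₀ δ := by
    rw [Real.ball_eq_Ioo] at hat hbt ⊢
    exact uIoc_subset_uIcc.trans (ordConnected_Ioo.uIcc_subset hat hbt)
  refine norm_integral_le_of_norm_le_const fun s hs => ?_
  rw [← dist_eq_norm]
  exact (@hφδ (t, s) (max_lt ht (hsub hs))).le

theorem hasDerivAt_integral_of_collapsing_bounds [CompleteSpace E] {φ : ℝ → ℝ → E} {a b : ℝ → ℝ}
    {a' b' t₀ s₀ : ℝ}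
    (hφ : ContinuousAt (Function.uncurry φ) (t₀, s₀))
    (hint : ∀ᶠ t in 𝓝 t₀, IntervalIntegrable (φ t) volume (a t) (b t))
    (ha : HasDerivAt a a' t₀) (hb : HasDerivAt b b' t₀) (ha₀ : a t₀ = s₀) (hb₀ : b t₀ = s₀) :
    HasDerivAt (fun t => ∫ s in a t..b t, φ t s) ((b' - a') • φ t₀ s₀) t₀ := by
  set c := φ t₀ s₀
  have hrem : HasDerivAt (fun t => ∫ s in a t..b t, (φ t s - c)) 0 t₀ := by
    have hO : (fun t => b t - a t) =O[𝓝 t₀] fun t => t - t₀ := by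
      simpa [ha₀, hb₀] using (hb.sub ha).isBigO_sub
    have hlo := (isLittleO_integral_sub_of_continuousAt hφ
      (ha₀ ▸ ha.continuousAt.tendsto) (hb₀ ▸ hb.continuousAt.tendsto)).trans_isBigO hO
    rw [hasDerivAt_iff_isLittleO]
    simpa [ha₀, hb₀] using hlo
  refine ((hrem.add ((hb.sub ha).smul_const c)).congr_of_eventuallyEq ?_).congr_deriv
    (zero_add _)
  filter_upwards [hint] with t ht
  simp only [Pi.add_apply, Pi.sub_apply]
  rw [integral_sub ht intervalIntegrable_const, intervalIntegral.integral_const, sub_add_cancel]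

end

theorem deriv_eq_of_hasDerivAt_of_eqOn_Icc {F : Type*} [NormedAddCommGroup F] [NormedSpace ℝ F]
    {f g : ℝ → F} {g' : F} {t₀ T : ℝ} (hT : t₀ < T)
    (hf : DifferentiableAt ℝ f t₀) (hg : HasDerivAt g g' t₀) (hfg : EqOn f g (Icc t₀ T)) :
    deriv f t₀ = g' := by
  have hfg' : HasDerivWithinAt f g' (Ici t₀) t₀ :=
    hg.hasDerivWithinAt.congr_of_eventuallyEq
      (eventuallyEq_of_mem (Icc_mem_nhdsGE hT) hfg) (hfg ⟨le_rfl, hT.le⟩)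
  exact (uniqueDiffOn_Ici t₀ t₀ self_mem_Ici).eq_deriv _ hf.hasDerivAt.hasDerivWithinAt hfg'

theorem volterra_first_kind_x0_general
    (n : ℕ) (T : ℝ) (hT : 0 < T)
    (K : ℕ → ℝ → ℝ → ℝ) (α : ℕ → ℝ → ℝ) (f x : ℝ → ℝ)
    (hf : ContDiff ℝ 1 f)
    (hK : ∀ i, ContDiff ℝ 1 (fun p : ℝ × ℝ => K i p.1 p.2))
    (hαzero : ∀ i ≤ n, α i 0 = 0)
    (hαC1 : ∀ i ≤ n, ContDiff ℝ 1 (α i))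
    (hx : Continuous x)
    (heq : ∀ t ∈ Icc (0:ℝ) T,
      (∑ i ∈ Finset.range n, ∫ s in α i t..α (i+1) t, K (i+1) t s * x s) = f t) :
    deriv f 0 = x 0 * ∑ i ∈ Finset.range n,
        K (i+1) 0 0 * (deriv (α (i+1)) 0 - deriv (α i) 0) ∧
    ((∑ i ∈ Finset.range n, K (i+1) 0 0 * (deriv (α (i+1)) 0 - deriv (α i) 0)) ≠ 0 →
      x 0 = deriv f 0 /
        ∑ i ∈ Finset.range n, K (i+1) 0 0 * (deriv (α (i+1)) 0 - deriv (α i) 0)) := by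
  have hα : ∀ i ≤ n, HasDerivAt (α i) (deriv (α i) 0) 0 := fun i hi =>
    ((hαC1 i hi).differentiable one_ne_zero 0).hasDerivAt
  have hterm : ∀ i ∈ Finset.range n,
      HasDerivAt (fun t => ∫ s in α i t..α (i+1) t, K (i+1) t s * x s)
        (x 0 * (K (i+1) 0 0 * (deriv (α (i+1)) 0 - deriv (α i) 0))) 0 := by
    intro i hi
    have hi1 : i + 1 ≤ n := Finset.mem_range.1 hi
    have hφ : Continuous (Function.uncurry fun t s => K (i+1) t s * x s) :=
      (hK (i+1)).continuous.mul (hx.comp continuous_snd)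
    refine (hasDerivAt_integral_of_collapsing_bounds hφ.continuousAt
      (.of_forall fun t => (hφ.comp (.prodMk_right t)).intervalIntegrable _ _)
      (hα i (by omega)) (hα (i+1) hi1) (hαzero i (by omega)) (hαzero (i+1) hi1)).congr_deriv ?_
    simp only [smul_eq_mul]
    ring
  have hmain := deriv_eq_of_hasDerivAt_of_eqOn_Icc hT (hf.differentiable one_ne_zero 0)
    (HasDerivAt.fun_sum hterm) fun t ht => (heq t ht).symm
  rw [← Finset.mul_sum] at hmain
  exact ⟨hmain, fun hS => (eq_div_iff hS).2 hmain.symm⟩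

/-- Differentiating the first-kind Volterra equation with piecewise kernel at `t = 0`
yields `f'(0) = x(0) · Σ K_i(0,0)(α_i'(0) − α_{i-1}'(0))`, and in particular a formula
for `x(0)` when the sum is nonzero. -/
theorem volterra_first_kind_x0
    (n : ℕ) (hn : 1 ≤ n) (T : ℝ) (hT : 0 < T)
    (K : ℕ → ℝ → ℝ → ℝ) (α : ℕ → ℝ → ℝ) (f x : ℝ → ℝ)
    (hf : ContDiff ℝ 1 f)
    (hK : ∀ i, ContDiff ℝ 1 (fun p : ℝ × ℝ => K i p.1 p.2))
    (hα0 : ∀ t, α 0 t = 0) (hαn : ∀ t, α n t = t)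
    (hαzero : ∀ i ≤ n, α i 0 = 0)
    (hαC1 : ∀ i ≤ n, ContDiff ℝ 1 (α i))
    (hx : Continuous x)
    (heq : ∀ t ∈ Icc (0:ℝ) T,
      (∑ i ∈ Finset.range n, ∫ s in α i t..α (i+1) t, K (i+1) t s * x s) = f t) :
    deriv f 0 = x 0 * ∑ i ∈ Finset.range n,
        K (i+1) 0 0 * (deriv (α (i+1)) 0 - deriv (α i) 0) ∧
    ((∑ i ∈ Finset.range n, K (i+1) 0 0 * (deriv (α (i+1)) 0 - deriv (α i) 0)) ≠ 0 →
      x 0 = deriv f 0 /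
        ∑ i ∈ Finset.range n, K (i+1) 0 0 * (deriv (α (i+1)) 0 - deriv (α i) 0)) :=
  volterra_first_kind_x0_general n T hT K α f x hf hK hαzero hαC1 hx heq
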